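/- arXiv:1806.02955 — 2 statements merged into one kernel-verified Lean document; each statement's English description precedes it below -/
import Mathlib

section
/- Let ψ : ℝ → [0,∞) be a symmetric function with ∫_ℝ ψ = 1 and support contained in (−1,1), and for δ > 0 set ψ_δ(ξ) := δ^{-1}ψ(ξ/δ). Let g : ℝ → [0,1] be measurable and let F : ℝ → [0,1] be nondecreasing with lim_{ξ→−∞} F(ξ) = 0 and lim_{ξ→+∞} F(ξ) = 1. Then | ∫_ℝ g(ξ) ( F(ξ) − ∫_ℝ ψ_δ(ξ−ζ) F(ζ) dζ ) dξ | ≤ δ. -/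
/-!
Since `∫ ψ_δ = 1`, the mollification error is an average of translation differences:
`F ξ - (ψ_δ * F) ξ = ∫ ψ_δ(η) (F ξ - F (ξ - η)) dη`. For a monotone `F` with values in
`[a, b]` the difference `F - F(· - η)` has constant sign and its integral telescopes,
`∫_u^v (F ξ - F (ξ - η)) dξ = ∫_{v-η}^v F - ∫_{u-η}^u F`, so its `L¹` norm is at most
`(b - a) |η|`. Tonelli and `supp ψ_δ ⊆ (-δ, δ)` bound the `L¹` norm of `F - ψ_δ * F` by
`(b - a) δ`, and `0 ≤ g ≤ 1` does the rest.
-/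

open MeasureTheory Set Filter
open scoped Topology

section MonotoneShift

variable {F : ℝ → ℝ} {a b : ℝ}

theorem Monotone.intervalIntegral_sub_comp_sub_le (hF : Monotone F)
    (hFab : ∀ x, F x ∈ Icc a b) {η : ℝ} (hη : 0 ≤ η) (u v : ℝ) :
    ∫ ξ in u..v, (F ξ - F (ξ - η)) ≤ (b - a) * η := by
  have hint : ∀ s t : ℝ, IntervalIntegrable F volume s t := fun _ _ => hF.intervalIntegrable
  have hshift : Monotone fun ξ => F (ξ - η) := hF.comp fun _ _ h => sub_le_sub_right h η
  rw [intervalIntegral.integral_sub (hint u v) hshift.intervalIntegrable,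
    intervalIntegral.integral_comp_sub_right,
    intervalIntegral.integral_interval_sub_interval_comm' (hint _ _) (hint _ _) (hint _ _)]
  have hupper : ∫ x in v - η..v, F x ≤ ∫ _ in v - η..v, b :=
    intervalIntegral.integral_mono_on (by linarith) (hint _ _) intervalIntegrable_const
      fun x _ => (hFab x).2
  have hlower : ∫ _ in u - η..u, a ≤ ∫ x in u - η..u, F x :=
    intervalIntegral.integral_mono_on (by linarith) intervalIntegrable_const (hint _ _)
      fun x _ => (hFab x).1
  simp only [intervalIntegral.integral_const, sub_sub_cancel, smul_eq_mul] at hupper hlower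
  linarith

theorem Monotone.lintegral_sub_comp_sub_le (hF : Monotone F)
    (hFab : ∀ x, F x ∈ Icc a b) {η : ℝ} (hη : 0 ≤ η) :
    ∫⁻ ξ, ENNReal.ofReal (F ξ - F (ξ - η)) ≤ ENNReal.ofReal ((b - a) * η) := by
  have hshift : Monotone fun ξ => F (ξ - η) := hF.comp fun _ _ h => sub_le_sub_right h η
  have hcover := (aecover_Ioc (μ := volume) tendsto_neg_atTop_atBot tendsto_id)
    |>.lintegral_tendsto_of_countably_generated (f := fun ξ => ENNReal.ofReal (F ξ - F (ξ - η)))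
      (hF.measurable.sub hshift.measurable).ennreal_ofReal.aemeasurable
  refine _root_.le_of_tendsto hcover ((eventually_ge_atTop 0).mono fun r hr => ?_)
  show ∫⁻ ξ in Ioc (-r) r, _ ≤ _
  have hint : IntervalIntegrable (fun ξ => F ξ - F (ξ - η)) volume (-r) r :=
    hF.intervalIntegrable.sub hshift.intervalIntegrable
  rw [← ofReal_integral_eq_lintegral_ofReal hint.1
    (ae_of_all _ fun ξ => sub_nonneg.2 (hF (by linarith))),
    ← intervalIntegral.integral_of_le (by linarith)]
  exact ENNReal.ofReal_le_ofReal (hF.intervalIntegral_sub_comp_sub_le hFab hη _ _)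

theorem Monotone.lintegral_enorm_sub_comp_sub_le (hF : Monotone F)
    (hFab : ∀ x, F x ∈ Icc a b) (η : ℝ) :
    ∫⁻ ξ, ‖F ξ - F (ξ - η)‖ₑ ≤ ENNReal.ofReal ((b - a) * |η|) := by
  rcases le_total 0 η with hη | hη
  · rw [abs_of_nonneg hη]
    refine le_of_eq_of_le (lintegral_congr fun ξ => ?_) (hF.lintegral_sub_comp_sub_le hFab hη)
    rw [Real.enorm_eq_ofReal_abs, abs_of_nonneg (sub_nonneg.2 (hF (by linarith)))]
  · rw [abs_of_nonpos hη, ← lintegral_add_right_eq_self _ η]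
    refine le_of_eq_of_le (lintegral_congr fun ξ => ?_)
      (hF.lintegral_sub_comp_sub_le hFab (neg_nonneg.2 hη))
    rw [Real.enorm_eq_ofReal_abs, abs_of_nonpos (sub_nonpos.2 (hF (by linarith))),
      add_sub_cancel_right, neg_sub, sub_neg_eq_add]

end MonotoneShift

section Mollifier

variable {k F : ℝ → ℝ}

theorem sub_integral_comp_sub_mul_eq_integral (hk : Integrable k) (hk1 : ∫ t, k t = 1)
    (hFm : Measurable F) {C : ℝ} (hFC : ∀ x, |F x| ≤ C) (ξ : ℝ) :
    F ξ - ∫ ζ, k (ξ - ζ) * F ζ = ∫ η, k η * (F ξ - F (ξ - η)) := by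
  have hshift : ∫ ζ, k (ξ - ζ) * F ζ = ∫ η, k η * F (ξ - η) := by
    rw [← integral_sub_left_eq_self _ volume ξ]
    simp only [sub_sub_cancel]
  have hkF : Integrable fun η => k η * F (ξ - η) :=
    hk.mul_bdd (hFm.comp (measurable_const.sub measurable_id)).aestronglyMeasurable
      (ae_of_all _ fun η => hFC (ξ - η))
  simp only [mul_sub]
  rw [hshift, integral_sub (hk.mul_const _) hkF, integral_mul_const, hk1, one_mul]

theorem Monotone.lintegral_enorm_sub_mollify_le (hF : Monotone F)
    {a b : ℝ} (hFab : ∀ x, F x ∈ Icc a b) (hkm : Measurable k) (hk0 : ∀ t, 0 ≤ k t)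
    (hk1 : ∫ t, k t = 1) {δ : ℝ} (hkδ : ∀ t, k t ≠ 0 → |t| ≤ δ) :
    ∫⁻ ξ, ‖F ξ - ∫ ζ, k (ξ - ζ) * F ζ‖ₑ ≤ ENNReal.ofReal ((b - a) * δ) := by
  have hk : Integrable k := Integrable.of_integral_ne_zero (f := k) (by simp [hk1])
  have hFm : Measurable F := hF.measurable
  have hFC : ∀ x, |F x| ≤ max |a| |b| := fun x => abs_le_max_abs_abs (hFab x).1 (hFab x).2
  have hab : 0 ≤ b - a := sub_nonneg.2 ((hFab 0).1.trans (hFab 0).2)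
  calc ∫⁻ ξ, ‖F ξ - ∫ ζ, k (ξ - ζ) * F ζ‖ₑ
      = ∫⁻ ξ, ‖∫ η, k η * (F ξ - F (ξ - η))‖ₑ := by
        simp_rw [sub_integral_comp_sub_mul_eq_integral hk hk1 hFm hFC]
    _ ≤ ∫⁻ ξ, ∫⁻ η, ‖k η‖ₑ * ‖F ξ - F (ξ - η)‖ₑ := by
        gcongr with ξ
        simpa only [enorm_mul] using
          enorm_integral_le_lintegral_enorm fun η => k η * (F ξ - F (ξ - η))
    _ = ∫⁻ η, ‖k η‖ₑ * ∫⁻ ξ, ‖F ξ - F (ξ - η)‖ₑ := by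
        rw [lintegral_lintegral_swap (by fun_prop)]
        exact lintegral_congr fun η => lintegral_const_mul _ (by fun_prop)
    _ ≤ ∫⁻ η, ‖k η‖ₑ * ENNReal.ofReal ((b - a) * δ) := by
        refine lintegral_mono fun η => ?_
        by_cases hη : k η = 0
        · simp [hη]
        · gcongr
          exact (hF.lintegral_enorm_sub_comp_sub_le hFab η).trans
            (ENNReal.ofReal_le_ofReal (mul_le_mul_of_nonneg_left (hkδ η hη) hab))
    _ = ENNReal.ofReal ((b - a) * δ) := by
        rw [lintegral_mul_const _ hkm.enorm, lintegral_enorm_of_nonneg hk0,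
          ← ofReal_integral_eq_lintegral_ofReal hk (ae_of_all _ hk0), hk1, ENNReal.ofReal_one,
          one_mul]

end Mollifier

theorem mollified_cdf_error_bound_general
    (ψ : ℝ → ℝ) (hψmeas : Measurable ψ) (hψnonneg : ∀ x, 0 ≤ ψ x)
    (hψint : (∫ x, ψ x) = 1)
    (hψsupp : Function.support ψ ⊆ Ioo (-1 : ℝ) 1)
    (δ : ℝ) (hδ : 0 < δ)
    (g : ℝ → ℝ) (hg : ∀ ξ, g ξ ∈ Icc (0 : ℝ) 1)
    (F : ℝ → ℝ) (hFmono : Monotone F) (hF : ∀ ξ, F ξ ∈ Icc (0 : ℝ) 1) :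
    |∫ ξ : ℝ, g ξ * (F ξ - ∫ ζ : ℝ, δ⁻¹ * ψ ((ξ - ζ) / δ) * F ζ)| ≤ δ := by
  set k : ℝ → ℝ := fun t => δ⁻¹ * ψ (t / δ)
  have hk1 : ∫ t, k t = 1 := by
    rw [integral_const_mul, Measure.integral_comp_div ψ δ, hψint, abs_of_pos hδ, smul_eq_mul,
      mul_one, inv_mul_cancel₀ hδ.ne']
  have hkδ : ∀ t, k t ≠ 0 → |t| ≤ δ := fun t ht => by
    have := abs_lt.2 (hψsupp (right_ne_zero_of_mul ht))
    rw [abs_div, abs_of_pos hδ, div_lt_one hδ] at this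
    exact this.le
  have hmoll := hFmono.lintegral_enorm_sub_mollify_le hF (by fun_prop)
    (fun t => mul_nonneg (inv_nonneg.2 hδ.le) (hψnonneg _)) hk1 hkδ
  rw [sub_zero, one_mul] at hmoll
  have hg1 : ∀ ξ, ‖g ξ‖ₑ ≤ 1 := fun ξ => by
    rw [Real.enorm_eq_ofReal_abs, abs_of_nonneg (hg ξ).1]
    exact ENNReal.ofReal_le_one.2 (hg ξ).2
  rw [← Real.norm_eq_abs, ← toReal_enorm]
  refine ENNReal.toReal_le_of_le_ofReal hδ.le ((enorm_integral_le_lintegral_enorm _).trans ?_)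
  refine (lintegral_mono fun ξ => ?_).trans hmoll
  rw [enorm_mul]
  exact mul_le_of_le_one_left' (hg1 ξ)

/-- **Mollification error for monotone distribution functions** (estimates (4.14),
(4.15)): let `ψ ≥ 0` be symmetric with `∫ψ = 1` and support in `(-1,1)`, and
`ψ_δ(ξ) = δ⁻¹ψ(ξ/δ)`.  If `g : ℝ → [0,1]` is measurable and `F : ℝ → [0,1]` is
nondecreasing with `F(-∞) = 0`, `F(+∞) = 1`, then
`|∫ g(ξ) (F(ξ) - (ψ_δ * F)(ξ)) dξ| ≤ δ`. -/
theorem mollified_cdf_error_bound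
    (ψ : ℝ → ℝ) (hψmeas : Measurable ψ) (hψnonneg : ∀ x, 0 ≤ ψ x)
    (hψsymm : ∀ x, ψ (-x) = ψ x) (hψint : (∫ x, ψ x) = 1)
    (hψsupp : Function.support ψ ⊆ Ioo (-1 : ℝ) 1)
    (δ : ℝ) (hδ : 0 < δ)
    (g : ℝ → ℝ) (hgmeas : Measurable g) (hg : ∀ ξ, g ξ ∈ Icc (0 : ℝ) 1)
    (F : ℝ → ℝ) (hFmono : Monotone F) (hF : ∀ ξ, F ξ ∈ Icc (0 : ℝ) 1)
    (hFbot : Tendsto F atBot (𝓝 0)) (hFtop : Tendsto F atTop (𝓝 1)) :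
    |∫ ξ : ℝ, g ξ * (F ξ - ∫ ζ : ℝ, δ⁻¹ * ψ ((ξ - ζ) / δ) * F ζ)| ≤ δ :=
  mollified_cdf_error_bound_general ψ hψmeas hψnonneg hψint hψsupp δ hδ g hg F hFmono hF
end

section
/- Let U and H be separable Hilbert spaces, (e_k) an orthonormal basis of U, and let σ_k : [0,T] → H, k ∈ ℕ, be measurable with Σ_k ‖σ_k(s)‖²_H ≤ C² for almost every s ∈ [0,T]. Let (h_n) ⊂ L²([0,T];U) with sup_n ∫₀^T |h_n(s)|²_U ds ≤ M and h_n → h weakly in L²([0,T];U), and let (v_n) ⊂ L²([0,T];H) with v_n → v strongly in L²([0,T];H). Then sup_{t∈[0,T]} | ∫₀^t Σ_k ⟨σ_k(s), v_n(s)⟩_H · ⟨h_n(s) − h(s), e_k⟩_U ds | → 0 as n → ∞. -/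
open MeasureTheory Set Filter
open scoped ENNReal Topology RealInnerProductSpace symmDiff

/-!
Write `Φ w = Σ_k ⟪σ_k, w⟫ e_k`, so that `‖Φ w‖ ≤ C ‖w‖` and the integrand is
`⟪h_n - h, Φ v_n⟫_U`. In `L²(0,T)` the integral up to `t` is then the pairing of `h_n - h` with
`1_{(0,t]} Φ v_n`, and `1_{(0,t]} Φ v_n → 1_{(0,t]} Φ v` uniformly in `t` because `v_n → v`
strongly. The curve `t ↦ 1_{(0,t]} Φ v` is continuous in `L²`, so along it the pairings with the
bounded sequence `h_n - h` are equicontinuous in `t`; they converge pointwise by weak convergence,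
hence uniformly on the compact `[0,T]` by Ascoli's theorem.
-/

noncomputable section

section Hilbert

variable {X ι E : Type*} [TopologicalSpace X] [NormedAddCommGroup E] [InnerProductSpace ℝ E]

theorem sq_norm_inner_le (x w : E) : ‖⟪x, w⟫‖ ^ 2 ≤ ‖x‖ ^ 2 * ‖w‖ ^ 2 := by
  rw [← mul_pow]
  exact pow_le_pow_left₀ (norm_nonneg _) (norm_inner_le_norm _ _) 2

theorem norm_le_of_tendsto_inner
    {l : Filter ι} [l.NeBot] {x : ι → E} {B : ℝ} (hx : ∀ i, ‖x i‖ ≤ B) {y : E} {c : ℝ}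
    (hy : Tendsto (fun i => ⟪x i, y⟫) l (𝓝 c)) (hc : ‖y‖ ^ 2 ≤ c) : ‖y‖ ≤ B := by
  have hcB : c ≤ B * ‖y‖ := le_of_tendsto' hy fun i =>
    (real_inner_le_norm _ _).trans (mul_le_mul_of_nonneg_right (hx i) (norm_nonneg y))
  obtain ⟨i⟩ : Nonempty ι := l.nonempty_of_neBot
  nlinarith [norm_nonneg y, (norm_nonneg (x i)).trans (hx i)]

theorem equicontinuous_inner_of_norm_le {x : ι → E} {B : ℝ} (hx : ∀ i, ‖x i‖ ≤ B) {Ψ : X → E}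
    (hΨ : Continuous Ψ) : Equicontinuous fun i t => ⟪x i, Ψ t⟫ := by
  intro t₀
  refine Metric.equicontinuousAt_of_continuity_modulus (fun t => B * dist (Ψ t₀) (Ψ t)) ?_ _
    (Eventually.of_forall fun t i => ?_)
  · simpa using ((tendsto_const_nhds (x := Ψ t₀)).dist (hΨ.tendsto t₀)).const_mul B
  · rw [Real.dist_eq, ← inner_sub_right, dist_eq_norm]
    exact (abs_real_inner_le_norm _ _).trans
      (mul_le_mul_of_nonneg_right (hx i) (norm_nonneg _))

theorem tendstoUniformly_inner_of_weakly_tendsto_zero [CompactSpace X] {l : Filter ι}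
    {x : ι → E} {B : ℝ} (hx : ∀ i, ‖x i‖ ≤ B) (hweak : ∀ y, Tendsto (fun i => ⟪x i, y⟫) l (𝓝 0))
    {Ψ : X → E} (hΨ : Continuous Ψ) {y : ι → X → E} (hy : TendstoUniformly y Ψ l) :
    TendstoUniformly (fun i t => ⟪x i, y i t⟫) 0 l := by
  have hmain : TendstoUniformly (fun i t => ⟪x i, Ψ t⟫) 0 l :=
    UniformFun.tendsto_iff_tendstoUniformly.mp <|
      ((equicontinuous_inner_of_norm_le hx hΨ).tendsto_uniformFun_iff_pi l 0).mpr <|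
        tendsto_pi_nhds.mpr fun t => hweak (Ψ t)
  have herr : TendstoUniformly (fun i t => ⟪x i, y i t - Ψ t⟫) 0 l := by
    rw [Metric.tendstoUniformly_iff] at hy ⊢
    intro ε hε
    have hB : 0 < |B| + 1 := by positivity
    filter_upwards [hy (ε / (|B| + 1)) (div_pos hε hB)] with i hi t
    rw [Pi.zero_apply, dist_zero_left, Real.norm_eq_abs]
    calc |⟪x i, y i t - Ψ t⟫| ≤ (|B| + 1) * ‖y i t - Ψ t‖ :=
          (abs_real_inner_le_norm _ _).trans (by gcongr; linarith [hx i, le_abs_self B])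
      _ < (|B| + 1) * (ε / (|B| + 1)) := by
        rw [← dist_eq_norm, dist_comm]; gcongr; exact hi t
      _ = ε := by field_simp
  convert herr.add hmain using 1
  · ext i t
    simp [← inner_add_right]
  · simp

end Hilbert

section AdjointSum

variable {ι U H : Type*} [NormedAddCommGroup U] [InnerProductSpace ℝ U]
  [NormedAddCommGroup H] [InnerProductSpace ℝ H]

/-- `Σ_k ⟪σ_k, w⟫ e_k`, the adjoint of the Hilbert–Schmidt operator `u ↦ Σ_k ⟪u, e_k⟫ σ_k`
(the paper's `Φ(u) w` with `σ_k = g_k(·, u)`). -/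
def adjointSum (e : HilbertBasis ι ℝ U) (σ : ι → H) (w : H) : U :=
  ∑' k, ⟪σ k, w⟫ • e k

variable (e : HilbertBasis ι ℝ U) {σ : ι → H} (hσ : Summable fun k => ‖σ k‖ ^ 2)
include hσ

theorem summable_sq_norm_inner (w : H) : Summable fun k => ‖⟪σ k, w⟫‖ ^ 2 :=
  (hσ.mul_right (‖w‖ ^ 2)).of_nonneg_of_le (fun k => by positivity)
    fun k => sq_norm_inner_le (σ k) w

theorem memℓp_inner (w : H) : Memℓp (fun k => ⟪σ k, w⟫) 2 :=
  memℓp_gen (by simpa only [ENNReal.toReal_ofNat, Real.rpow_two] using summable_sq_norm_inner hσ w)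

theorem adjointSum_eq_repr_symm (w : H) :
    adjointSum e σ w = e.repr.symm ⟨fun k => ⟪σ k, w⟫, memℓp_inner hσ w⟩ :=
  (e.hasSum_repr_symm ⟨fun k => ⟪σ k, w⟫, memℓp_inner hσ w⟩).tsum_eq

theorem hasSum_adjointSum (w : H) :
    HasSum (fun k => ⟪σ k, w⟫ • e k) (adjointSum e σ w) := by
  rw [adjointSum_eq_repr_symm e hσ]
  exact e.hasSum_repr_symm _

theorem hasSum_mul_inner_adjointSum (w : H) (u : U) :
    HasSum (fun k => ⟪σ k, w⟫ * ⟪u, e k⟫) ⟪u, adjointSum e σ w⟫ := by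
  simpa [innerSL_apply_apply, real_inner_smul_right, mul_comm] using
    (hasSum_adjointSum e hσ w).mapL (innerSL ℝ u)

theorem adjointSum_sub (w w' : H) :
    adjointSum e σ (w - w') = adjointSum e σ w - adjointSum e σ w' := by
  refine (hasSum_adjointSum e hσ (w - w')).unique ?_
  simpa [inner_sub_right, sub_smul] using
    (hasSum_adjointSum e hσ w).sub (hasSum_adjointSum e hσ w')

theorem norm_adjointSum_le (w : H) :
    ‖adjointSum e σ w‖ ≤ √(∑' k, ‖σ k‖ ^ 2) * ‖w‖ := by
  rw [adjointSum_eq_repr_symm e hσ, LinearIsometryEquiv.norm_map]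
  refine lp.norm_le_of_tsum_le (by norm_num) (by positivity) ?_
  simp only [ENNReal.toReal_ofNat, Real.rpow_two]
  rw [mul_pow, Real.sq_sqrt (tsum_nonneg fun k => by positivity), ← tsum_mul_right]
  exact (summable_sq_norm_inner hσ w).tsum_le_tsum (fun k => sq_norm_inner_le (σ k) w)
    (hσ.mul_right _)

end AdjointSum

theorem summable_and_tsum_le_of_tsum_ofReal_le {ι : Type*} {a : ι → ℝ} (ha : ∀ k, 0 ≤ a k)
    {c : ℝ} (hc : 0 ≤ c) (h : ∑' k, ENNReal.ofReal (a k) ≤ ENNReal.ofReal c) :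
    Summable a ∧ ∑' k, a k ≤ c := by
  have hsum : Summable a := by
    simpa [ENNReal.toReal_ofReal (ha _)] using
      ENNReal.summable_toReal (h.trans_lt ENNReal.ofReal_lt_top).ne
  refine ⟨hsum, ?_⟩
  rwa [← ENNReal.ofReal_tsum_of_nonneg ha hsum, ENNReal.ofReal_le_ofReal_iff hc] at h

section Lp

variable {α ι E : Type*} [MeasurableSpace α] {μ : Measure α} [NormedAddCommGroup E]

theorem sq_eLpNorm_two (f : α → E) :
    eLpNorm f 2 μ ^ 2 = ∫⁻ x, ENNReal.ofReal (‖f x‖ ^ 2) ∂μ := by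
  have := eLpNorm_nnreal_pow_eq_lintegral (f := f) (μ := μ) (p := 2) two_ne_zero
  simp only [ENNReal.coe_ofNat, NNReal.coe_ofNat, ENNReal.rpow_two] at this
  simp [this, ENNReal.ofReal_pow]

theorem memLp_two_of_lintegral_le {f : α → E} (hf : AEStronglyMeasurable f μ) {M : ℝ}
    (hM : ∫⁻ x, ENNReal.ofReal (‖f x‖ ^ 2) ∂μ ≤ ENNReal.ofReal M) :
    MemLp f 2 μ ∧ (eLpNorm f 2 μ).toReal ≤ √M := by
  rw [← sq_eLpNorm_two] at hM
  have hfin : eLpNorm f 2 μ ≠ ∞ := by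
    intro htop
    simp [htop] at hM
  refine ⟨⟨hf, hfin.lt_top⟩, ?_⟩
  rcases le_or_gt M 0 with hM0 | hM0
  · rw [ENNReal.ofReal_of_nonpos hM0, nonpos_iff_eq_zero, pow_eq_zero_iff two_ne_zero] at hM
    simp [hM]
  · refine Real.le_sqrt_of_sq_le ?_
    rw [← ENNReal.toReal_pow]
    exact ENNReal.toReal_le_of_le_ofReal hM0.le hM

theorem tendsto_eLpNorm_two_of_lintegral {l : Filter ι} {f : ι → α → E}
    (hf : Tendsto (fun i => ∫⁻ x, ENNReal.ofReal (‖f i x‖ ^ 2) ∂μ) l (𝓝 0)) :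
    Tendsto (fun i => eLpNorm (f i) 2 μ) l (𝓝 0) := by
  simp_rw [← sq_eLpNorm_two] at hf
  have := (ENNReal.continuous_rpow_const (y := ((2 : ℕ) : ℝ)⁻¹)).tendsto 0 |>.comp hf
  simp only [Function.comp_def, ENNReal.pow_rpow_inv_natCast two_ne_zero] at this
  simpa using this

theorem tendstoUniformly_toLp_indicator {p : ℝ≥0∞} [Fact (1 ≤ p)] {X : Type*} {S : X → Set α}
    (hS : ∀ x, MeasurableSet (S x)) {l : Filter ι} {f : ι → α → E} {g : α → E}
    (hf : ∀ i, MemLp (f i) p μ) (hg : MemLp g p μ)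
    (hfg : Tendsto (fun i => eLpNorm (f i - g) p μ) l (𝓝 0)) :
    TendstoUniformly (fun i x => ((hf i).indicator (hS x)).toLp _)
      (fun x => (hg.indicator (hS x)).toLp _) l := by
  rw [Metric.tendstoUniformly_iff]
  intro ε hε
  filter_upwards [(ENNReal.tendsto_nhds_zero.mp hfg) (ENNReal.ofReal (ε / 2)) (by positivity)]
    with i hi x
  rw [dist_comm, dist_eq_norm, ← MemLp.toLp_sub, Lp.norm_toLp, ← indicator_sub']
  refine lt_of_le_of_lt ?_ (half_lt_self hε)
  exact ENNReal.toReal_le_of_le_ofReal (by positivity) ((eLpNorm_indicator_le _).trans hi)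

theorem MeasureTheory.MemLp.norm_toLp_sub_le {p : ℝ≥0∞} [Fact (1 ≤ p)] {f g : α → E}
    (hf : MemLp f p μ) (hg : MemLp g p μ) :
    ‖(hf.sub hg).toLp (f - g)‖ ≤ (eLpNorm f p μ).toReal + (eLpNorm g p μ).toReal := by
  rw [MemLp.toLp_sub, ← Lp.norm_toLp f hf, ← Lp.norm_toLp g hg]
  exact norm_sub_le _ _

theorem Set.Ioc_symmDiff_Ioc_subset_uIoc {β : Type*} [LinearOrder β] (a b c : β) :
    Ioc a b ∆ Ioc a c ⊆ uIoc b c := by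
  intro x hx
  simp only [mem_symmDiff, mem_Ioc, not_and, not_le] at hx
  rcases hx with ⟨⟨hax, hxb⟩, hc⟩ | ⟨⟨hax, hxc⟩, hb⟩
  · exact Ioc_subset_uIoc' ⟨hc hax, hxb⟩
  · exact Ioc_subset_uIoc ⟨hb hax, hxc⟩

theorem continuous_toLp_indicator_Ioc {μ : Measure ℝ} (hμ : μ ≤ volume) {p : ℝ≥0∞} [Fact (1 ≤ p)]
    (hp : p ≠ ∞) {f : ℝ → E} (hf : MemLp f p μ) (a : ℝ) :
    Continuous fun t => (hf.indicator (measurableSet_Ioc (a := a) (b := t))).toLp _ := by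
  refine Metric.continuous_iff.mpr fun t ε hε => ?_
  obtain ⟨δ, hδ, hsmall⟩ := hf.eLpNorm_indicator_le Fact.out hp (half_pos hε)
  refine ⟨δ, hδ, fun r hr => ?_⟩
  have hvol : μ (Ioc a r ∆ Ioc a t) ≤ ENNReal.ofReal δ := calc
    μ (Ioc a r ∆ Ioc a t) ≤ volume (uIoc r t) :=
      (hμ _).trans (measure_mono (Ioc_symmDiff_Ioc_subset_uIoc a r t))
    _ = ENNReal.ofReal (dist r t) := by rw [Real.volume_uIoc, Real.dist_eq, abs_sub_comm]
    _ ≤ ENNReal.ofReal δ := ENNReal.ofReal_le_ofReal hr.le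
  rw [dist_eq_norm, ← MemLp.toLp_sub, Lp.norm_toLp, eLpNorm_indicator_sub_indicator]
  exact (ENNReal.toReal_le_of_le_ofReal (half_pos hε).le
    (hsmall _ (measurableSet_Ioc.symmDiff measurableSet_Ioc) hvol)).trans_lt (half_lt_self hε)

end Lp

section L2

variable {α ι E : Type*} [MeasurableSpace α] {μ : Measure α}
  [NormedAddCommGroup E] [InnerProductSpace ℝ E]

theorem MeasureTheory.MemLp.inner_toLp_eq_integral {f : α → E} (hf : MemLp f 2 μ)
    (y : Lp E 2 μ) : ⟪hf.toLp f, y⟫ = ∫ x, ⟪f x, y x⟫ ∂μ := by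
  rw [L2.inner_def]
  refine integral_congr_ae ?_
  filter_upwards [hf.coeFn_toLp] with x hx
  rw [hx]

theorem MeasureTheory.MemLp.inner_toLp_toLp {f g : α → E} (hf : MemLp f 2 μ) (hg : MemLp g 2 μ) :
    ⟪hf.toLp f, hg.toLp g⟫ = ∫ x, ⟪f x, g x⟫ ∂μ := by
  rw [hf.inner_toLp_eq_integral]
  refine integral_congr_ae ?_
  filter_upwards [hg.coeFn_toLp] with x hx
  rw [hx]

theorem tendsto_inner_toLp_sub {l : Filter ι} {f : ι → α → E} {g : α → E}
    (hf : ∀ i, MemLp (f i) 2 μ) (hg : MemLp g 2 μ)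
    (hweak : ∀ ψ, MemLp ψ 2 μ →
      Tendsto (fun i => ∫ x, ⟪f i x, ψ x⟫ ∂μ) l (𝓝 (∫ x, ⟪g x, ψ x⟫ ∂μ)))
    (y : Lp E 2 μ) : Tendsto (fun i => ⟪((hf i).sub hg).toLp (f i - g), y⟫) l (𝓝 0) := by
  have hsub (i : ι) : ((hf i).sub hg).toLp (f i - g) = (hf i).toLp (f i) - hg.toLp g :=
    MemLp.toLp_sub (hf i) hg
  simp_rw [hsub, inner_sub_left, MemLp.inner_toLp_eq_integral]
  simpa using (hweak y (Lp.memLp y)).sub_const (∫ x, ⟪g x, y x⟫ ∂μ)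

/-- Testing against the truncations `{‖g‖ ≤ R}.indicator g` bounds their `L²` norms by `B`, and
Fatou's lemma lets `R → ∞`. -/
theorem memLp_two_of_weak_limit [IsFiniteMeasure μ] {l : Filter ι} [l.NeBot] {f : ι → α → E}
    {g : α → E} {B : ℝ} (hf : ∀ i, MemLp (f i) 2 μ) (hB : ∀ i, (eLpNorm (f i) 2 μ).toReal ≤ B)
    (hg : AEStronglyMeasurable g μ)
    (hweak : ∀ ψ, MemLp ψ 2 μ →
      Tendsto (fun i => ∫ x, ⟪f i x, ψ x⟫ ∂μ) l (𝓝 (∫ x, ⟪g x, ψ x⟫ ∂μ))) :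
    MemLp g 2 μ := by
  obtain ⟨g', hg'm, hgg'⟩ := hg
  set ψ : ℕ → α → E := fun R => {x | ‖g' x‖ ≤ R}.indicator g'
  have hψ : ∀ R : ℕ, MemLp (ψ R) 2 μ := fun R =>
    MemLp.of_bound (hg'm.indicator (measurableSet_le hg'm.norm.measurable measurable_const)
      ).aestronglyMeasurable R (Eventually.of_forall fun x => by
        by_cases hx : ‖g' x‖ ≤ R <;> simp [ψ, hx])
  have hψB : ∀ R, eLpNorm (ψ R) 2 μ ≤ ENNReal.ofReal B := by
    intro R
    have hnorm : ‖(hψ R).toLp (ψ R)‖ ≤ B := by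
      refine norm_le_of_tendsto_inner (l := l) (x := fun i => (hf i).toLp (f i))
        (c := ∫ x, ⟪g x, ψ R x⟫ ∂μ) (by simpa [Lp.norm_toLp] using hB) ?_ (le_of_eq ?_)
      · simpa only [MemLp.inner_toLp_toLp] using hweak (ψ R) (hψ R)
      · rw [← real_inner_self_eq_norm_sq, MemLp.inner_toLp_toLp]
        refine integral_congr_ae ?_
        filter_upwards [hgg'] with x hx
        by_cases hR : ‖g' x‖ ≤ R <;> simp [ψ, hx, hR]
    rw [Lp.norm_toLp] at hnorm
    rw [← ENNReal.ofReal_toReal (hψ R).eLpNorm_ne_top]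
    exact ENNReal.ofReal_le_ofReal hnorm
  have hlim : ∀ x, Tendsto (fun R : ℕ => ψ R x) atTop (𝓝 (g' x)) := fun x =>
    tendsto_const_nhds.congr' <| (tendsto_natCast_atTop_atTop.eventually_ge_atTop ‖g' x‖).mono
      fun R hR => by simp [ψ, hR]
  refine ⟨⟨g', hg'm, hgg'⟩, ?_⟩
  rw [eLpNorm_congr_ae hgg']
  calc eLpNorm g' 2 μ ≤ atTop.liminf fun R => eLpNorm (ψ R) 2 μ :=
        Lp.eLpNorm_lim_le_liminf_eLpNorm (fun R => (hψ R).1) g' (ae_of_all _ hlim)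
    _ ≤ ENNReal.ofReal B := liminf_le_of_frequently_le' (Frequently.of_forall hψB)
    _ < ∞ := ENNReal.ofReal_lt_top

theorem inner_toLp_indicator_eq_setIntegral {A S : Set α} (hS : MeasurableSet S) (hSA : S ⊆ A)
    {g φ : α → E} (hg : MemLp g 2 (μ.restrict A)) (hφ : MemLp φ 2 (μ.restrict A)) :
    ⟪hg.toLp g, (hφ.indicator hS).toLp _⟫ = ∫ x in S, ⟪g x, φ x⟫ ∂μ := by
  have hind : ∀ x, ⟪g x, S.indicator φ x⟫ = S.indicator (fun x => ⟪g x, φ x⟫) x := by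
    intro x
    by_cases hx : x ∈ S <;> simp [hx]
  rw [MemLp.inner_toLp_toLp]
  simp_rw [hind]
  rw [integral_indicator hS, Measure.restrict_restrict hS, inter_eq_left.mpr hSA]

end L2

section AdjointSumField

variable {α U H : Type*} [MeasurableSpace α] {μ : Measure α}
  [NormedAddCommGroup U] [InnerProductSpace ℝ U] [NormedAddCommGroup H] [InnerProductSpace ℝ H]
  (e : HilbertBasis ℕ ℝ U) {σ : ℕ → α → H}

theorem aestronglyMeasurable_adjointSum (hσ : ∀ k, AEStronglyMeasurable (σ k) μ)
    (hσsum : ∀ᵐ s ∂μ, Summable fun k => ‖σ k s‖ ^ 2) {w : α → H}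
    (hw : AEStronglyMeasurable w μ) :
    AEStronglyMeasurable (fun s => adjointSum e (σ · s) (w s)) μ := by
  refine aestronglyMeasurable_of_tendsto_ae atTop
    (f := fun m s => ∑ k ∈ Finset.range m, ⟪σ k s, w s⟫ • e k) (fun m => ?_) ?_
  · exact Finset.aestronglyMeasurable_fun_sum _ fun k _ => ((hσ k).inner hw).smul_const (e k)
  · filter_upwards [hσsum] with s hs
    exact (hasSum_adjointSum e hs (w s)).tendsto_sum_nat

theorem setIntegral_tsum_mul_inner_eq_inner_toLp {A S : Set α} (hS : MeasurableSet S)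
    (hSA : S ⊆ A) (hσsum : ∀ᵐ s ∂μ.restrict A, Summable fun k => ‖σ k s‖ ^ 2) {u : α → U}
    {w : α → H} (hu : MemLp u 2 (μ.restrict A))
    (hw : MemLp (fun s => adjointSum e (σ · s) (w s)) 2 (μ.restrict A)) :
    ∫ s in S, ∑' k, ⟪σ k s, w s⟫ * ⟪u s, e k⟫ ∂μ = ⟪hu.toLp u, (hw.indicator hS).toLp _⟫ := by
  rw [inner_toLp_indicator_eq_setIntegral hS hSA hu hw]
  refine integral_congr_ae (ae_restrict_of_ae_restrict_of_subset hSA ?_)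
  filter_upwards [hσsum] with s hs using (hasSum_mul_inner_adjointSum e hs _ _).tsum_eq

variable {C : ℝ} (hσC : ∀ᵐ s ∂μ, Summable (fun k => ‖σ k s‖ ^ 2) ∧ ∑' k, ‖σ k s‖ ^ 2 ≤ C ^ 2)
include hσC

theorem ae_norm_adjointSum_le (w : α → H) :
    ∀ᵐ s ∂μ, ‖adjointSum e (σ · s) (w s)‖ ≤ |C| * ‖w s‖ := by
  filter_upwards [hσC] with s hs
  refine (norm_adjointSum_le e hs.1 (w s)).trans (mul_le_mul_of_nonneg_right ?_ (norm_nonneg _))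
  rw [← Real.sqrt_sq_eq_abs]
  exact Real.sqrt_le_sqrt hs.2

theorem memLp_adjointSum {p : ℝ≥0∞} (hσ : ∀ k, AEStronglyMeasurable (σ k) μ) {w : α → H}
    (hw : MemLp w p μ) : MemLp (fun s => adjointSum e (σ · s) (w s)) p μ :=
  hw.of_le_mul (aestronglyMeasurable_adjointSum e hσ (hσC.mono fun _ hs => hs.1) hw.1)
    (ae_norm_adjointSum_le e hσC w)

theorem eLpNorm_adjointSum_sub_le (p : ℝ≥0∞) (w w' : α → H) :
    eLpNorm ((fun s => adjointSum e (σ · s) (w s)) - fun s => adjointSum e (σ · s) (w' s)) p μ ≤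
      ENNReal.ofReal |C| * eLpNorm (w - w') p μ := by
  refine eLpNorm_le_mul_eLpNorm_of_ae_le_mul ?_ p
  filter_upwards [hσC, ae_norm_adjointSum_le e hσC (w - w')] with s hs hle
  rwa [Pi.sub_apply, ← adjointSum_sub e hs.1]

theorem tendsto_eLpNorm_adjointSum_sub {ι : Type*} {l : Filter ι} {p : ℝ≥0∞} {w : ι → α → H}
    {w₀ : α → H} (hw : Tendsto (fun i => eLpNorm (w i - w₀) p μ) l (𝓝 0)) :
    Tendsto (fun i => eLpNorm
      ((fun s => adjointSum e (σ · s) (w i s)) - fun s => adjointSum e (σ · s) (w₀ s)) p μ) l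
      (𝓝 0) := by
  have hlim := ENNReal.Tendsto.const_mul (a := ENNReal.ofReal |C|) hw (Or.inr ENNReal.ofReal_ne_top)
  rw [mul_zero] at hlim
  exact tendsto_of_tendsto_of_tendsto_of_le_of_le tendsto_const_nhds hlim (fun _ => zero_le)
    fun i => eLpNorm_adjointSum_sub_le e hσC p (w i) w₀

end AdjointSumField

theorem control_drift_pairing_convergence_general
    {U H : Type}
    [NormedAddCommGroup U] [InnerProductSpace ℝ U]
    [NormedAddCommGroup H] [InnerProductSpace ℝ H]
    (e : HilbertBasis ℕ ℝ U)
    (T : ℝ) (C M : ℝ)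
    (σ : ℕ → ℝ → H) (hσmeas : ∀ k, StronglyMeasurable (σ k))
    (hσbdd : ∀ᵐ s ∂(volume.restrict (Ioc (0 : ℝ) T)),
      (∑' k : ℕ, ENNReal.ofReal (‖σ k s‖ ^ 2)) ≤ ENNReal.ofReal (C ^ 2))
    (hn : ℕ → ℝ → U) (h : ℝ → U)
    (hhnmeas : ∀ n, AEStronglyMeasurable (hn n) (volume.restrict (Ioc (0 : ℝ) T)))
    (hhmeas : AEStronglyMeasurable h (volume.restrict (Ioc (0 : ℝ) T)))
    (hhnbdd : ∀ n, (∫⁻ s in Ioc (0 : ℝ) T, ENNReal.ofReal (‖hn n s‖ ^ 2)) ≤ ENNReal.ofReal M)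
    -- `h_n → h` weakly in `L²([0,T];U)`
    (hweak : ∀ g : ℝ → U, MemLp g 2 (volume.restrict (Ioc (0 : ℝ) T)) →
      Tendsto (fun n => ∫ s in Ioc (0 : ℝ) T, ⟪hn n s, g s⟫) atTop
        (𝓝 (∫ s in Ioc (0 : ℝ) T, ⟪h s, g s⟫)))
    (vn : ℕ → ℝ → H) (v : ℝ → H)
    (hvn : ∀ n, MemLp (vn n) 2 (volume.restrict (Ioc (0 : ℝ) T)))
    (hv : MemLp v 2 (volume.restrict (Ioc (0 : ℝ) T)))
    -- `v_n → v` strongly in `L²([0,T];H)`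
    (hstrong : Tendsto (fun n => ∫⁻ s in Ioc (0 : ℝ) T, ENNReal.ofReal (‖vn n s - v s‖ ^ 2))
      atTop (𝓝 0)) :
    ∀ δ > (0 : ℝ), ∃ N₀ : ℕ, ∀ n ≥ N₀, ∀ t ∈ Icc (0 : ℝ) T,
      |∫ s in Ioc (0 : ℝ) t, ∑' k : ℕ, ⟪σ k s, vn n s⟫ * ⟪hn n s - h s, e k⟫| ≤ δ := by
  set μ := volume.restrict (Ioc (0 : ℝ) T)
  have hσC : ∀ᵐ s ∂μ, Summable (fun k => ‖σ k s‖ ^ 2) ∧ ∑' k, ‖σ k s‖ ^ 2 ≤ C ^ 2 :=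
    hσbdd.mono fun s => summable_and_tsum_le_of_tsum_ofReal_le (fun _ => sq_nonneg _) (sq_nonneg C)
  have hΦ {w : ℝ → H} (hw : MemLp w 2 μ) :=
    memLp_adjointSum e hσC (fun k => (hσmeas k).aestronglyMeasurable) hw
  have hhn := fun n => memLp_two_of_lintegral_le (hhnmeas n) (hhnbdd n)
  have hh : MemLp h 2 μ :=
    memLp_two_of_weak_limit (fun n => (hhn n).1) (fun n => (hhn n).2) hhmeas hweak
  have key := tendstoUniformly_inner_of_weakly_tendsto_zero (X := Icc (0 : ℝ) T)
    (fun n => ((hhn n).1.norm_toLp_sub_le hh).trans (add_le_add_left (hhn n).2 _))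
    (tendsto_inner_toLp_sub (fun n => (hhn n).1) hh hweak)
    ((continuous_toLp_indicator_Ioc Measure.restrict_le_self ENNReal.ofNat_ne_top (hΦ hv) 0).comp
      continuous_subtype_val)
    (tendstoUniformly_toLp_indicator
      (fun t : Icc (0 : ℝ) T => measurableSet_Ioc (a := (0 : ℝ)) (b := (t : ℝ)))
      (fun n => hΦ (hvn n)) (hΦ hv)
      (tendsto_eLpNorm_adjointSum_sub e hσC (tendsto_eLpNorm_two_of_lintegral hstrong)))
  intro δ hδ
  obtain ⟨N₀, hN₀⟩ := eventually_atTop.mp (Metric.tendstoUniformly_iff.mp key δ hδ)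
  refine ⟨N₀, fun n hnN t ht => ?_⟩
  rw [setIntegral_tsum_mul_inner_eq_inner_toLp e measurableSet_Ioc (Ioc_subset_Ioc_right ht.2)
    (hσC.mono fun _ hs => hs.1) (u := fun s => hn n s - h s) ((hhn n).1.sub hh) (hΦ (hvn n))]
  have hclose := (hN₀ n hnN ⟨t, ht⟩).le
  rw [Pi.zero_apply, dist_zero_left, Real.norm_eq_abs] at hclose
  exact hclose

/-- **Convergence of the control–drift pairing** (the key convergence (4.23)–(4.26) in
Theorem 4.11, abstracted): let `U, H` be separable Hilbert spaces, `(e_k)` an orthonormal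
basis of `U`, and `σ_k : [0,T] → H` measurable with `Σ_k ‖σ_k(s)‖² ≤ C²` a.e.  If
`h_n → h` weakly in `L²([0,T];U)` with `∫₀^T |h_n|² ≤ M`, and `v_n → v` strongly in
`L²([0,T];H)`, then
`sup_{t∈[0,T]} |∫₀^t Σ_k ⟪σ_k(s), v_n(s)⟫_H ⟪h_n(s)-h(s), e_k⟫_U ds| → 0`. -/
theorem control_drift_pairing_convergence
    {U H : Type}
    [NormedAddCommGroup U] [InnerProductSpace ℝ U] [TopologicalSpace.SeparableSpace U] [CompleteSpace U]
    [NormedAddCommGroup H] [InnerProductSpace ℝ H] [TopologicalSpace.SeparableSpace H] [CompleteSpace H]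
    (e : HilbertBasis ℕ ℝ U)
    (T : ℝ) (hT : 0 < T) (C M : ℝ)
    (σ : ℕ → ℝ → H) (hσmeas : ∀ k, StronglyMeasurable (σ k))
    (hσbdd : ∀ᵐ s ∂(volume.restrict (Ioc (0 : ℝ) T)),
      (∑' k : ℕ, ENNReal.ofReal (‖σ k s‖ ^ 2)) ≤ ENNReal.ofReal (C ^ 2))
    (hn : ℕ → ℝ → U) (h : ℝ → U)
    (hhnmeas : ∀ n, AEStronglyMeasurable (hn n) (volume.restrict (Ioc (0 : ℝ) T)))
    (hhmeas : AEStronglyMeasurable h (volume.restrict (Ioc (0 : ℝ) T)))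
    (hhnbdd : ∀ n, (∫⁻ s in Ioc (0 : ℝ) T, ENNReal.ofReal (‖hn n s‖ ^ 2)) ≤ ENNReal.ofReal M)
    -- `h_n → h` weakly in `L²([0,T];U)`
    (hweak : ∀ g : ℝ → U, MemLp g 2 (volume.restrict (Ioc (0 : ℝ) T)) →
      Tendsto (fun n => ∫ s in Ioc (0 : ℝ) T, ⟪hn n s, g s⟫) atTop
        (𝓝 (∫ s in Ioc (0 : ℝ) T, ⟪h s, g s⟫)))
    (vn : ℕ → ℝ → H) (v : ℝ → H)
    (hvn : ∀ n, MemLp (vn n) 2 (volume.restrict (Ioc (0 : ℝ) T)))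
    (hv : MemLp v 2 (volume.restrict (Ioc (0 : ℝ) T)))
    -- `v_n → v` strongly in `L²([0,T];H)`
    (hstrong : Tendsto (fun n => ∫⁻ s in Ioc (0 : ℝ) T, ENNReal.ofReal (‖vn n s - v s‖ ^ 2))
      atTop (𝓝 0)) :
    ∀ δ > (0 : ℝ), ∃ N₀ : ℕ, ∀ n ≥ N₀, ∀ t ∈ Icc (0 : ℝ) T,
      |∫ s in Ioc (0 : ℝ) t, ∑' k : ℕ, ⟪σ k s, vn n s⟫ * ⟪hn n s - h s, e k⟫| ≤ δ :=
  control_drift_pairing_convergence_general e T C M σ hσmeas hσbdd hn h hhnmeas hhmeas hhnbdd hweak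
    vn v hvn hv hstrong
end
end
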